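/- Let H ∈ C(ℝⁿ×ℝⁿ) be ℤⁿ-periodic in x and satisfy (NR1) p ↦ H(x,p) is convex for every x, (NR2) min_{p∈ℝⁿ} H(x,p) = H(x,0) for all x, and (NR3) max_{x∈ℝⁿ} H(x,0) = 0. Set f(x) := −H(x,0) ≥ 0. Then H satisfies condition (A9)₋ relative to f: for every η > 0 and θ > 1 and all x, p, q ∈ ℝⁿ with H(x,p) ≤ −f(x) and H(x,q) ≥ −η, one has H(x, p + θ(q−p)) ≥ −θη + ψ(η,θ), where ψ(η,θ) := min_{x∈ℝⁿ} max{(θ−1)f(x), θη − f(x)} > 0. -/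
import Mathlib


noncomputable section

open Filter Set Topology

namespace HJpaper

/-- Points of `ℝⁿ` (with the Euclidean norm). -/
abbrev E (n : ℕ) := EuclideanSpace ℝ (Fin n)

/-- The vector of `ℝⁿ` with integer coordinates `k`. -/
def lat (n : ℕ) (k : Fin n → ℤ) : E n :=
  (WithLp.equiv 2 (Fin n → ℝ)).symm fun i => (k i : ℝ)

/-- `f : ℝⁿ → ℝ` is `ℤⁿ`-periodic. -/
def Per {n : ℕ} (f : E n → ℝ) : Prop :=
  ∀ (x : E n) (k : Fin n → ℤ), f (x + lat n k) = f x

/-- (A2): continuity of the Hamiltonian. -/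
def ContH {n : ℕ} (H : E n → E n → ℝ) : Prop :=
  Continuous fun q : E n × E n => H q.1 q.2

/-- (A3): `ℤⁿ`-periodicity of the Hamiltonian in `x`. -/
def PerH {n : ℕ} (H : E n → E n → ℝ) : Prop :=
  ∀ p : E n, Per fun x => H x p

/-- (A4): coercivity of the Hamiltonian. -/
def Coercive {n : ℕ} (H : E n → E n → ℝ) : Prop :=
  ∀ M : ℝ, ∃ r : ℝ, ∀ x p : E n, r ≤ ‖p‖ → M ≤ H x p

/-- viscosity subsolution of `u_t + H(x, D_x u) = 0` in `Q = ℝⁿ × (0,∞)`. -/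
def CPSub {n : ℕ} (H : E n → E n → ℝ) (u : E n → ℝ → ℝ) : Prop :=
  ∀ φ : E n → ℝ → ℝ, ContDiff ℝ 1 (fun q : E n × ℝ => φ q.1 q.2) →
    ∀ (x : E n) (t : ℝ), 0 < t →
      IsLocalMaxOn (fun q : E n × ℝ => u q.1 q.2 - φ q.1 q.2)
        {q : E n × ℝ | 0 < q.2} (x, t) →
      deriv (fun s => φ x s) t + H x (gradient (fun y => φ y t) x) ≤ 0

/-- viscosity supersolution of `u_t + H(x, D_x u) = 0` in `Q = ℝⁿ × (0,∞)`. -/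
def CPSuper {n : ℕ} (H : E n → E n → ℝ) (u : E n → ℝ → ℝ) : Prop :=
  ∀ φ : E n → ℝ → ℝ, ContDiff ℝ 1 (fun q : E n × ℝ => φ q.1 q.2) →
    ∀ (x : E n) (t : ℝ), 0 < t →
      IsLocalMinOn (fun q : E n × ℝ => u q.1 q.2 - φ q.1 q.2)
        {q : E n × ℝ | 0 < q.2} (x, t) →
      0 ≤ deriv (fun s => φ x s) t + H x (gradient (fun y => φ y t) x)

/-- viscosity solution of `u_t + H(x, D_x u) = 0` in `Q`. -/
def CPSol {n : ℕ} (H : E n → E n → ℝ) (u : E n → ℝ → ℝ) : Prop :=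
  CPSub H u ∧ CPSuper H u

/-- `u` is a solution of the Cauchy problem (CP) for the data `u₀`: it is uniformly
continuous on `ℝⁿ × [0,∞)`, `ℤⁿ`-periodic in `x`, a viscosity solution of the PDE in
`Q = ℝⁿ × (0,∞)`, and attains the initial data (continuously, by uniform continuity). -/
def IsCP {n : ℕ} (H : E n → E n → ℝ) (u₀ : E n → ℝ) (u : E n → ℝ → ℝ) : Prop :=
  UniformContinuousOn (fun q : E n × ℝ => u q.1 q.2) {q : E n × ℝ | 0 ≤ q.2} ∧
  (∀ t : ℝ, 0 ≤ t → Per fun x => u x t) ∧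
  CPSol H u ∧
  ∀ x : E n, u x 0 = u₀ x

/-- viscosity subsolution of `H(x, Dv(x)) ≤ g(x)` in `ℝⁿ`. -/
def StatSub {n : ℕ} (H : E n → E n → ℝ) (g : E n → ℝ) (v : E n → ℝ) : Prop :=
  ∀ φ : E n → ℝ, ContDiff ℝ 1 φ →
    ∀ x : E n, IsLocalMax (fun y => v y - φ y) x → H x (gradient φ x) ≤ g x

/-- viscosity supersolution of `H(x, Dv(x)) ≥ g(x)` in `ℝⁿ`. -/
def StatSuper {n : ℕ} (H : E n → E n → ℝ) (g : E n → ℝ) (v : E n → ℝ) : Prop :=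
  ∀ φ : E n → ℝ, ContDiff ℝ 1 φ →
    ∀ x : E n, IsLocalMin (fun y => v y - φ y) x → g x ≤ H x (gradient φ x)

/-- viscosity solution of `H(x, Dv(x)) = c` in `ℝⁿ`. -/
def StatSol {n : ℕ} (H : E n → E n → ℝ) (c : ℝ) (v : E n → ℝ) : Prop :=
  StatSub H (fun _ => c) v ∧ StatSuper H (fun _ => c) v

/-- Lipschitz continuity (with some constant). -/
def IsLip {n : ℕ} (f : E n → ℝ) : Prop := ∃ K : NNReal, LipschitzWith K f

/-- (A5): the additive eigenvalue is zero, i.e. `H(x,Dv)=0` has a Lipschitz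
`ℤⁿ`-periodic viscosity solution. -/
def A5 {n : ℕ} (H : E n → E n → ℝ) : Prop :=
  ∃ v : E n → ℝ, IsLip v ∧ Per v ∧ StatSol H 0 v

/-- condition (A6)₊. -/
def A6plus {n : ℕ} (H : E n → E n → ℝ) : Prop :=
  ∃ η₀ > (0:ℝ), ∃ θ₀ > (1:ℝ),
    ∀ η ∈ Set.Ioo (0:ℝ) η₀, ∀ θ ∈ Set.Ioo (1:ℝ) θ₀, ∃ ψ > (0:ℝ),
      ∀ x p q : E n, H x p ≤ 0 → η ≤ H x q → η * θ + ψ ≤ H x (p + θ • (q - p))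

/-- condition (A6)₋. -/
def A6minus {n : ℕ} (H : E n → E n → ℝ) : Prop :=
  ∃ η₀ > (0:ℝ), ∃ θ₀ > (1:ℝ),
    ∀ η ∈ Set.Ioo (0:ℝ) η₀, ∀ θ ∈ Set.Ioo (1:ℝ) θ₀, ∃ ψ > (0:ℝ),
      ∀ x p q : E n, H x p ≤ 0 → -η ≤ H x q → -(η * θ) + ψ ≤ H x (p + θ • (q - p))

/-- the modulus `ω_{H,R}`. -/
def omegaH {n : ℕ} (H : E n → E n → ℝ) (R r : ℝ) : ℝ :=
  sSup {a : ℝ | ∃ x p q : E n, ‖p‖ ≤ R ∧ ‖q‖ ≤ R ∧ ‖p - q‖ ≤ r ∧ a = |H x p - H x q|}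

/-- `w(x,t) = sup_{s ≥ t} [u(x,t) − v₀(x) − θ(u(x,s) − v₀(x) + η(s−t))]`. -/
def wPlus {n : ℕ} (u : E n → ℝ → ℝ) (v₀ : E n → ℝ) (η θ : ℝ) (x : E n) (t : ℝ) : ℝ :=
  sSup {a : ℝ | ∃ s : ℝ, t ≤ s ∧ a = u x t - v₀ x - θ * (u x s - v₀ x + η * (s - t))}

/-- `w(x,t) = max_{0 ≤ s ≤ t} [u(x,t) − v₀(x) − θ(u(x,s) − v₀(x) − η(s−t))]`. -/
def wMinus {n : ℕ} (u : E n → ℝ → ℝ) (v₀ : E n → ℝ) (η θ : ℝ) (x : E n) (t : ℝ) : ℝ :=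
  sSup {a : ℝ | ∃ s : ℝ, 0 ≤ s ∧ s ≤ t ∧ a = u x t - v₀ x - θ * (u x s - v₀ x - η * (s - t))}

/-- the Namah–Roquejoffre conditions (NR1)–(NR3) imply (A9)₋ relative to
`f(x) = -H(x,0)`, with the explicit constant `ψ(η,θ) = min_x max{(θ-1)f(x), θη - f(x)}`. -/
theorem stmt_19 {n : ℕ} (H : E n → E n → ℝ)
    (hHc : ContH H) (hHp : PerH H)
    (hconv : ∀ x : E n, ConvexOn ℝ Set.univ (H x))
    (hNR2 : ∀ x p : E n, H x 0 ≤ H x p)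
    (hNR3a : ∀ x : E n, H x 0 ≤ 0) (hNR3b : ∃ x : E n, H x 0 = 0)
    (f : E n → ℝ) (hf : ∀ x : E n, f x = -H x 0) :
    ∀ η θ : ℝ, 0 < η → 1 < θ →
      0 < sInf (Set.range fun y : E n => max ((θ - 1) * f y) (θ * η - f y)) ∧
      ∀ x p q : E n, H x p ≤ -f x → -η ≤ H x q →
        -(θ * η) + sInf (Set.range fun y : E n => max ((θ - 1) * f y) (θ * η - f y))
          ≤ H x (p + θ • (q - p)) := by
  intro η θ hη hθ
  have hθ0 : (0:ℝ) < θ := by linarith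
  have hf0 : ∀ y, 0 ≤ f y := fun y => by rw [hf]; linarith [hNR3a y]
  set g : E n → ℝ := fun y => max ((θ - 1) * f y) (θ * η - f y) with hg
  have hgpos : ∀ y, 0 < g y := by
    intro y
    rcases lt_or_ge 0 (f y) with h | h
    · exact lt_max_of_lt_left (mul_pos (by linarith) h)
    · have : f y = 0 := le_antisymm h (hf0 y)
      refine lt_max_of_lt_right ?_
      rw [this]
      nlinarith
  have hbdd : BddBelow (Set.range g) := by
    refine ⟨0, ?_⟩
    rintro _ ⟨y, rfl⟩
    exact le_trans (mul_nonneg (by linarith) (hf0 y)) (le_max_left _ _)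
  have hfc : Continuous f := by
    have h1 : Continuous fun x : E n => H x 0 :=
      hHc.comp (continuous_id.prodMk continuous_const)
    have : f = fun x => -H x 0 := funext hf
    rw [this]; exact h1.neg
  have hgc : Continuous g :=
    ((continuous_const.mul hfc).max (continuous_const.sub hfc))
  have hper : ∀ (x : E n) (k : Fin n → ℤ), g (x + lat n k) = g x := by
    intro x k
    have hfper : f (x + lat n k) = f x := by
      rw [hf, hf]; exact congrArg Neg.neg (hHp 0 x k)
    simp only [hg, hfper]
  have key : ∀ x : E n, ∃ k : Fin n → ℤ, ‖x + lat n k‖ ≤ Real.sqrt n := by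
    intro x
    refine ⟨fun i => -⌊x i⌋, ?_⟩
    have hco : ∀ i, |(x + lat n fun i => -⌊x i⌋) i| ≤ 1 := by
      intro i
      have hci : (x + lat n fun i => -⌊x i⌋) i = x i - ⌊x i⌋ := by
        show x i + ((-⌊x i⌋ : ℤ) : ℝ) = x i - ⌊x i⌋
        push_cast; ring
      rw [hci, abs_le]
      constructor
      · linarith [Int.sub_one_lt_floor (x i), Int.floor_le (x i)]
      · linarith [Int.lt_floor_add_one (x i), Int.floor_le (x i)]
    rw [EuclideanSpace.norm_eq]
    have : ∑ i, ‖(x + lat n fun i => -⌊x i⌋) i‖ ^ 2 ≤ (n : ℝ) := by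
      calc ∑ i, ‖(x + lat n fun i => -⌊x i⌋) i‖ ^ 2
          ≤ ∑ _i : Fin n, (1:ℝ) := by
            refine Finset.sum_le_sum fun i _ => ?_
            have := hco i
            rw [Real.norm_eq_abs]
            nlinarith [abs_nonneg ((x + lat n fun i => -⌊x i⌋) i)]
        _ = (n : ℝ) := by simp
    exact Real.sqrt_le_sqrt this
  obtain ⟨x₀, hx₀, hmin⟩ :=
    (isCompact_closedBall (0 : E n) (Real.sqrt n)).exists_isMinOn
      ⟨0, Metric.mem_closedBall_self (Real.sqrt_nonneg _)⟩ hgc.continuousOn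
  have hinf_ge : g x₀ ≤ sInf (Set.range g) := by
    refine le_csInf ⟨g x₀, Set.mem_range_self _⟩ ?_
    rintro _ ⟨y, rfl⟩
    obtain ⟨k, hk⟩ := key y
    calc g x₀ ≤ g (y + lat n k) := hmin (mem_closedBall_zero_iff.mpr hk)
      _ = g y := hper y k
  refine ⟨lt_of_lt_of_le (hgpos x₀) hinf_ge, ?_⟩
  intro x p q hp hq
  have h1 : -f x = H x 0 := by rw [hf]; ring
  have hfx : H x p = -f x := le_antisymm hp (h1 ▸ hNR2 x p)
  set r : E n := p + θ • (q - p) with hr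
  have hcomb : q = (1/θ) • r + (1 - 1/θ) • p := by
    rw [hr]
    match_scalars <;> field_simp <;> ring
  have hcv := (hconv x).2 (Set.mem_univ r) (Set.mem_univ p)
    (by positivity : (0:ℝ) ≤ 1/θ)
    (sub_nonneg.mpr ((div_le_one hθ0).mpr (by linarith)) : (0:ℝ) ≤ 1 - 1/θ)
    (by ring)
  rw [← hcomb] at hcv
  simp only [smul_eq_mul] at hcv
  have h2 : -f x ≤ H x r := h1 ▸ hNR2 x r
  have h3 : -(θ * η) + (θ - 1) * f x ≤ H x r := by
    rw [hfx] at hcv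
    have h4 : -η - (1 - 1/θ) * (-f x) ≤ 1/θ * H x r := by linarith
    have h5 : θ * (-η - (1 - 1/θ) * (-f x)) ≤ θ * (1/θ * H x r) :=
      mul_le_mul_of_nonneg_left h4 hθ0.le
    have e1 : θ * (1/θ * H x r) = H x r := by field_simp
    have e2 : θ * (-η - (1 - 1/θ) * (-f x)) = -(θ * η) + (θ - 1) * f x := by
      field_simp; ring
    linarith
  have hle : sInf (Set.range g) ≤ g x := csInf_le hbdd (Set.mem_range_self x)
  have hmaxle : g x ≤ H x r + θ * η := by
    refine max_le (by linarith) (by linarith)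
  linarith
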